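/- The baker map B is chaotic on [0,1]: B maps [0,1] onto [0,1], is topologically transitive on [0,1] (with the subspace topology), has a dense set of periodic points in [0,1], and is sensitive to initial conditions on [0,1] (with the standard metric). (B is not continuous at 1/2, but it is continuous at every periodic point of B.) -/

import Mathlib

noncomputable def baker (x : ℝ) : ℝ := if x ≤ 1 / 2 then 2 * x else 2 * x - 1

theorem baker_mem {x : ℝ} (hx : x ∈ Set.Icc (0 : ℝ) 1) :
    baker x ∈ Set.Icc (0 : ℝ) 1 := by
  obtain ⟨h0, h1⟩ := hx
  unfold baker
  split_ifs with h
  · exact ⟨by linarith, by linarith⟩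
  · exact ⟨by linarith, by linarith⟩

noncomputable def bakerSub : Set.Icc (0 : ℝ) 1 → Set.Icc (0 : ℝ) 1 :=
  fun x => ⟨baker x, baker_mem x.2⟩

/-! On `(0, 1]` the baker map is the doubling map `t ↦ 2 * t` reduced modulo `1` into `(0, 1]`
(`toIocMod one_pos 0`), so `baker^[n] x` is `2 ^ n * x` reduced into `(0, 1]`. Hence `baker^[n]`
maps every dyadic interval `(m / 2 ^ n, (m + 1) / 2 ^ n]` onto `(0, 1]`, which gives transitivity
and sensitivity, and the points `k / (2 ^ n - 1)` are `n`-periodic, which gives density of the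
periodic points. The only discontinuity `1 / 2` is sent to the fixed point `1`, so it is not
periodic. -/

open Set Function Filter Topology

lemma baker_toIocMod (t : ℝ) :
    baker (toIocMod one_pos 0 t) = toIocMod one_pos 0 (2 * t) := by
  obtain ⟨hu0, hu1⟩ := toIocMod_mem_Ioc one_pos 0 t
  have ht := toIocMod_add_toIocDiv_zsmul one_pos 0 t
  set u := toIocMod one_pos 0 t
  set k := toIocDiv one_pos 0 t
  rw [zsmul_one] at ht
  symm
  rw [toIocMod_eq_iff, zero_add]
  unfold baker
  split_ifs with h
  · exact ⟨⟨by linarith, by linarith⟩, 2 * k, by rw [zsmul_one]; push_cast; linarith⟩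
  · exact ⟨⟨by linarith, by linarith⟩, 2 * k + 1, by rw [zsmul_one]; push_cast; linarith⟩

lemma baker_iterate_toIocMod (n : ℕ) (t : ℝ) :
    baker^[n] (toIocMod one_pos 0 t) = toIocMod one_pos 0 (2 ^ n * t) := by
  induction n generalizing t with
  | zero => simp
  | succ n ih => rw [iterate_succ_apply, baker_toIocMod, ih, pow_succ, mul_assoc]

lemma baker_iterate_of_mem_Ioc {x : ℝ} (hx : x ∈ Ioc 0 1) (n : ℕ) :
    baker^[n] x = toIocMod one_pos 0 (2 ^ n * x) := by
  rw [← baker_iterate_toIocMod, (toIocMod_eq_self one_pos).2 (by rwa [zero_add])]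

lemma baker_iterate_eq_of_mem_Ioc {x y : ℝ} (hx : x ∈ Ioc 0 1) (hy : y ∈ Ioc 0 1) {n : ℕ}
    (m : ℤ) (h : 2 ^ n * x = y + m) : baker^[n] x = y := by
  rw [baker_iterate_of_mem_Ioc hx, h, ← zsmul_one, toIocMod_add_zsmul,
    (toIocMod_eq_self one_pos).2 (by rwa [zero_add])]

lemma bakerSub_iterate_coe (n : ℕ) (x : Icc (0 : ℝ) 1) :
    ((bakerSub^[n] x : Icc (0 : ℝ) 1) : ℝ) = baker^[n] x :=
  (Semiconj.iterate_right (f := Subtype.val) (fun _ => rfl) n) x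

lemma exists_pos_two_pow_mul_gt (c : ℝ) {d : ℝ} (hd : 0 < d) : ∃ n > 0, c < 2 ^ n * d := by
  obtain ⟨n, hn⟩ := exists_nat_gt (c / d)
  refine ⟨n + 1, n.succ_pos, (div_lt_iff₀ hd).1 (hn.trans ?_)⟩
  exact_mod_cast (Nat.lt_succ_self n).trans (Nat.lt_two_pow_self)

lemma exists_iterate_baker_eq_of_lt {a b : ℝ} (ha : 0 ≤ a) (hab : a < b) (hb : b ≤ 1) :
    ∃ n > 0, ∀ y ∈ Ioc (0 : ℝ) 1, ∃ x ∈ Ioo a b, baker^[n] x = y := by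
  obtain ⟨n, hn, hgap⟩ := exists_pos_two_pow_mul_gt 2 (sub_pos.2 hab)
  refine ⟨n, hn, fun y ⟨hy0, hy1⟩ => ?_⟩
  have h2n : (0 : ℝ) < 2 ^ n := by positivity
  set m := ⌈a * 2 ^ n⌉₊
  have hm : a * 2 ^ n ≤ m := Nat.le_ceil _
  have hm' : (m : ℝ) < a * 2 ^ n + 1 := Nat.ceil_lt_add_one (by positivity)
  have hx : ((m : ℝ) + y) / 2 ^ n ∈ Ioo a b :=
    ⟨by rw [lt_div_iff₀ h2n]; linarith, by rw [div_lt_iff₀ h2n]; linarith⟩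
  refine ⟨_, hx, baker_iterate_eq_of_mem_Ioc ⟨by linarith [hx.1], by linarith [hx.2]⟩
    ⟨hy0, hy1⟩ m ?_⟩
  field_simp
  push_cast
  ring

lemma exists_iterate_baker_eq_self_mem_Ioo {a b : ℝ} (ha : 0 ≤ a) (hab : a < b) (hb : b ≤ 1) :
    ∃ n > 0, ∃ x ∈ Ioo a b, baker^[n] x = x := by
  obtain ⟨n, hn, hgap⟩ := exists_pos_two_pow_mul_gt 2 (sub_pos.2 hab)
  have hden : (0 : ℝ) < 2 ^ n - 1 := by nlinarith
  set k := ⌊a * (2 ^ n - 1)⌋₊ + 1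
  have hk : a * (2 ^ n - 1) < k := by push_cast [k]; exact Nat.lt_floor_add_one _
  have hk' : (k : ℝ) ≤ a * (2 ^ n - 1) + 1 := by
    push_cast [k]; linarith [Nat.floor_le (by positivity : 0 ≤ a * (2 ^ n - 1))]
  have hx : (k : ℝ) / (2 ^ n - 1) ∈ Ioo a b :=
    ⟨by rw [lt_div_iff₀ hden]; linarith, by rw [div_lt_iff₀ hden]; nlinarith⟩
  have hx' : (k : ℝ) / (2 ^ n - 1) ∈ Ioc 0 1 := ⟨by positivity, by linarith [hx.2]⟩
  refine ⟨n, hn, _, hx, baker_iterate_eq_of_mem_Ioc hx' hx' k ?_⟩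
  field_simp
  push_cast
  ring

lemma exists_Ioo_subset_of_isOpen {U : Set (Icc (0 : ℝ) 1)} (hU : IsOpen U)
    (hne : U.Nonempty) : ∃ a b, 0 ≤ a ∧ a < b ∧ b ≤ 1 ∧
      ∀ x : Icc (0 : ℝ) 1, (x : ℝ) ∈ Ioo a b → x ∈ U := by
  obtain ⟨⟨u, hu0, hu1⟩, hu⟩ := hne
  obtain ⟨W, hW, rfl⟩ := isOpen_induced_iff.1 hU
  obtain ⟨l, r, ⟨hl, hr⟩, hlr⟩ := mem_nhds_iff_exists_Ioo_subset.1 (hW.mem_nhds hu)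
  refine ⟨max 0 l, min 1 r, le_max_left _ _, ?_, min_le_left _ _, fun x ⟨hxa, hxb⟩ => ?_⟩
  · simp only [max_lt_iff, lt_min_iff]
    exact ⟨⟨zero_lt_one, by linarith⟩, by linarith, by linarith⟩
  · exact hlr ⟨(le_max_right _ _).trans_lt hxa, hxb.trans_le (min_le_right _ _)⟩

lemma exists_iterate_bakerSub_eq {U : Set (Icc (0 : ℝ) 1)} (hU : IsOpen U)
    (hne : U.Nonempty) :
    ∃ n > 0, ∀ y : Icc (0 : ℝ) 1, 0 < (y : ℝ) → ∃ x ∈ U, bakerSub^[n] x = y := by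
  obtain ⟨a, b, ha, hab, hb, hsub⟩ := exists_Ioo_subset_of_isOpen hU hne
  obtain ⟨n, hn, h⟩ := exists_iterate_baker_eq_of_lt ha hab hb
  refine ⟨n, hn, fun y hy => ?_⟩
  obtain ⟨x, hx, hxy⟩ := h y ⟨hy, y.2.2⟩
  have hxI : x ∈ Icc (0 : ℝ) 1 := ⟨by linarith [hx.1], by linarith [hx.2]⟩
  exact ⟨⟨x, hxI⟩, hsub _ hx, Subtype.ext (by rw [bakerSub_iterate_coe, hxy])⟩

lemma exists_iterate_bakerSub_eq_self_mem {U : Set (Icc (0 : ℝ) 1)} (hU : IsOpen U)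
    (hne : U.Nonempty) : ∃ x ∈ U, ∃ n > 0, bakerSub^[n] x = x := by
  obtain ⟨a, b, ha, hab, hb, hsub⟩ := exists_Ioo_subset_of_isOpen hU hne
  obtain ⟨n, hn, x, hx, hxx⟩ := exists_iterate_baker_eq_self_mem_Ioo ha hab hb
  have hxI : x ∈ Icc (0 : ℝ) 1 := ⟨by linarith [hx.1], by linarith [hx.2]⟩
  exact ⟨⟨x, hxI⟩, hsub _ hx, n, hn, Subtype.ext (by rw [bakerSub_iterate_coe, hxx])⟩

lemma baker_div_two {y : ℝ} (hy : y ≤ 1) : baker (y / 2) = y := by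
  rw [baker, if_pos (by linarith)]
  ring

lemma baker_half : baker (1 / 2) = 1 := by norm_num [baker]

lemma baker_iterate_half {n : ℕ} (hn : 0 < n) : baker^[n] (1 / 2) = 1 := by
  obtain ⟨k, rfl⟩ := Nat.exists_eq_add_one_of_ne_zero hn.ne'
  rw [iterate_succ_apply, baker_half]
  exact iterate_fixed (by norm_num [baker]) k

lemma continuousAt_baker {x : ℝ} (hx : x ≠ 1 / 2) : ContinuousAt baker x := by
  rcases hx.lt_or_gt with h | h
  · refine (continuous_const_mul 2).continuousAt.congr
      (eventually_of_mem (Iio_mem_nhds h) fun t ht => ?_)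
    exact (if_pos ht.le).symm
  · refine (show Continuous fun t : ℝ => 2 * t - 1 by fun_prop).continuousAt.congr
      (eventually_of_mem (Ioi_mem_nhds h) fun t ht => ?_)
    exact (if_neg (not_le.2 ht)).symm

lemma not_continuousWithinAt_baker_half : ¬ ContinuousWithinAt baker (Ioi (1 / 2)) (1 / 2) := by
  intro h
  have hright : Tendsto baker (𝓝[>] (1 / 2)) (𝓝 0) := by
    have : Tendsto (fun x : ℝ => 2 * x - 1) (𝓝[>] (1 / 2)) (𝓝 (2 * (1 / 2) - 1)) :=
      ((continuous_const_mul 2).sub continuous_const).continuousWithinAt.tendsto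
    refine (by norm_num : (2 : ℝ) * (1 / 2) - 1 = 0) ▸ this.congr' ?_
    exact eventually_nhdsWithin_of_forall fun x hx => (if_neg (not_le.2 hx)).symm
  exact one_ne_zero (tendsto_nhds_unique (by simpa only [baker_half] using h.tendsto) hright)

lemma not_continuousAt_bakerSub_half : ¬ ContinuousAt bakerSub ⟨1 / 2, by norm_num⟩ := by
  intro h
  have hIcc : ContinuousWithinAt baker (Icc 0 1) (1 / 2) :=
    (continuousWithinAt_iff_continuousAt_domRestrict _ _).2
      (continuous_subtype_val.continuousAt.comp h)
  refine not_continuousWithinAt_baker_half ?_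
  rw [ContinuousWithinAt, ← nhdsWithin_Ioc_eq_nhdsGT (by norm_num : (1 / 2 : ℝ) < 1)]
  exact hIcc.mono fun x hx => ⟨by linarith [hx.1], hx.2⟩

lemma continuousAt_bakerSub_of_iterate_eq_self {x : Icc (0 : ℝ) 1} {n : ℕ} (hn : 0 < n)
    (hx : bakerSub^[n] x = x) : ContinuousAt bakerSub x := by
  have hhalf : (x : ℝ) ≠ 1 / 2 := by
    intro h
    have := congrArg Subtype.val hx
    rw [bakerSub_iterate_coe, h, baker_iterate_half hn] at this
    norm_num at this
  exact (continuousAt_baker hhalf).restrict fun _ => baker_mem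

lemma exists_pos_one_quarter_lt_dist (p : Icc (0 : ℝ) 1) :
    ∃ y : Icc (0 : ℝ) 1, 0 < (y : ℝ) ∧ 1 / 4 < dist p y := by
  obtain ⟨hp0, hp1⟩ := p.2
  rcases le_or_gt (p : ℝ) (1 / 2) with hp | hp
  · refine ⟨⟨1, by norm_num⟩, one_pos, ?_⟩
    exact lt_abs.2 (Or.inr (by linarith))
  · refine ⟨⟨1 / 8, by norm_num⟩, by norm_num, ?_⟩
    exact lt_abs.2 (Or.inl (by linarith))

/-- the baker map is chaotic on `[0,1]`: it maps `[0,1]` onto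
`[0,1]`, is topologically transitive on `[0,1]` (subspace topology), has a
dense set of periodic points in `[0,1]`, and is sensitive to initial conditions
on `[0,1]` (standard metric). It is not continuous at `1/2`, but it is
continuous at every periodic point. -/
theorem stmt17 :
    Function.Surjective bakerSub ∧
    (∀ U V : Set (Set.Icc (0 : ℝ) 1), IsOpen U → IsOpen V →
      U.Nonempty → V.Nonempty → ∃ n > 0, (bakerSub^[n] '' U ∩ V).Nonempty) ∧
    Dense {x : Set.Icc (0 : ℝ) 1 | ∃ n > 0, bakerSub^[n] x = x} ∧
    (∃ η > 0, ∀ x : Set.Icc (0 : ℝ) 1, ∀ ε > 0, ∃ z : Set.Icc (0 : ℝ) 1,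
      dist x z < ε ∧ ∃ n : ℕ, dist (bakerSub^[n] x) (bakerSub^[n] z) > η) ∧
    ¬ ContinuousAt bakerSub ⟨1 / 2, by norm_num⟩ ∧
    (∀ x : Set.Icc (0 : ℝ) 1, (∃ n > 0, bakerSub^[n] x = x) →
      ContinuousAt bakerSub x) := by
  refine ⟨fun y => ?_, fun U V hU hV hUne hVne => ?_, ?_,
    ⟨1 / 4, by norm_num, fun x ε hε => ?_⟩, not_continuousAt_bakerSub_half,
    fun x ⟨n, hn, hx⟩ => continuousAt_bakerSub_of_iterate_eq_self hn hx⟩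
  · exact ⟨⟨y / 2, by linarith [y.2.1], by linarith [y.2.2]⟩,
      Subtype.ext (baker_div_two y.2.2)⟩
  · obtain ⟨a, b, ha, hab, hb, hsub⟩ := exists_Ioo_subset_of_isOpen hV hVne
    obtain ⟨n, hn, hsurj⟩ := exists_iterate_bakerSub_eq hU hUne
    have hmid : (a + b) / 2 ∈ Ioo a b := ⟨by linarith, by linarith⟩
    let y : Icc (0 : ℝ) 1 := ⟨(a + b) / 2, by linarith, by linarith⟩
    obtain ⟨x, hx, hxy⟩ := hsurj y (ha.trans_lt hmid.1)
    exact ⟨n, hn, y, ⟨x, hx, hxy⟩, hsub y hmid⟩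
  · exact dense_iff_inter_open.2 fun U hU hne => exists_iterate_bakerSub_eq_self_mem hU hne
  · obtain ⟨n, -, hsurj⟩ :=
      exists_iterate_bakerSub_eq Metric.isOpen_ball ⟨x, Metric.mem_ball_self hε⟩
    obtain ⟨y, hy0, hfar⟩ := exists_pos_one_quarter_lt_dist (bakerSub^[n] x)
    obtain ⟨z, hz, hzy⟩ := hsurj y hy0
    exact ⟨z, by rwa [dist_comm, ← Metric.mem_ball], n, hzy ▸ hfar⟩
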